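/- In the higher spherical algebra S(m,λ), for every r with 2 ≤ r ≤ m, the relations (ρωνδ)^r = (αβγσ)^r and (νδρω)^r = (γσαβ)^r hold. -/
import Mathlib


/-!
The higher spherical algebra `S(m,λ)` of Erdmann-Skowroński, realized as
the quotient of the path algebra of the quiver `Q_S` by the relations
(1)-(10).  Vertices `1,…,6` are encoded as `0,…,5 : Fin 6`.  The path
algebra is presented as the free algebra on the trivial paths
(idempotents) and the arrows, modulo the path-algebra relations
(orthogonal idempotents summing to `1`, source/target compatibility)
and the relations (1)-(10).  Paths compose left to right.
-/

namespace HigherSpherical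

/-- Arrows of `Q_S`: α:1→2, β:2→3, γ:3→4, σ:4→1, ν:3→5, δ:5→1, ρ:1→6, ω:6→3. -/
inductive SArr | al | be | ga | si | nu | de | rh | om

/-- Source vertex of an arrow. -/
def SArr.src : SArr → Fin 6
  | .al => 0 | .be => 1 | .ga => 2 | .si => 3
  | .nu => 2 | .de => 4 | .rh => 0 | .om => 5

/-- Target vertex of an arrow. -/
def SArr.tgt : SArr → Fin 6
  | .al => 1 | .be => 2 | .ga => 3 | .si => 0
  | .nu => 4 | .de => 0 | .rh => 5 | .om => 2

/-- The free algebra on trivial paths and arrows of `Q_S`. -/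
abbrev SFree (K : Type*) [Field K] := FreeAlgebra K (Fin 6 ⊕ SArr)

variable {K : Type*} [Field K]

/-- Trivial path at vertex `i`. -/
def fe (i : Fin 6) : SFree K := FreeAlgebra.ι K (Sum.inl i)
/-- The arrow `a` as an element of the free algebra. -/
def fa (a : SArr) : SFree K := FreeAlgebra.ι K (Sum.inr a)

def Al : SFree K := fa .al
def Be : SFree K := fa .be
def Ga : SFree K := fa .ga
def Si : SFree K := fa .si
def Nu : SFree K := fa .nu
def De : SFree K := fa .de
def Rh : SFree K := fa .rh
def Om : SFree K := fa .om

/-- The defining relations of `S(m,λ)`: path algebra relations together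
with the relations (1)-(10). -/
inductive SRel (K : Type*) [Field K] (m : ℕ) (l : K) : SFree K → SFree K → Prop
  | orth (i j : Fin 6) : SRel K m l (fe i * fe j) (if i = j then fe i else 0)
  | total : SRel K m l (∑ i, fe i) 1
  | src (a : SArr) : SRel K m l (fe a.src * fa a) (fa a)
  | tgt (a : SArr) : SRel K m l (fa a * fe a.tgt) (fa a)
  | r1 : SRel K m l (Be * Nu * De)
      (Be * Ga * Si + l • ((Be * Ga * Si * Al) ^ (m - 1) * (Be * Ga * Si)))
  | r2 : SRel K m l (Nu * De * Al)
      (Ga * Si * Al + l • ((Ga * Si * Al * Be) ^ (m - 1) * (Ga * Si * Al)))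
  | r3 : SRel K m l (Si * Rh * Om)
      (Si * Al * Be + l • ((Si * Al * Be * Ga) ^ (m - 1) * (Si * Al * Be)))
  | r4 : SRel K m l (Rh * Om * Ga)
      (Al * Be * Ga + l • ((Al * Be * Ga * Si) ^ (m - 1) * (Al * Be * Ga)))
  | r5 : SRel K m l (Al * Be * Nu) (Rh * Om * Nu)
  | r6 : SRel K m l (De * Al * Be) (De * Rh * Om)
  | r7 : SRel K m l (Om * Ga * Si) (Om * Nu * De)
  | r8 : SRel K m l (Ga * Si * Rh) (Nu * De * Rh)
  | r9 : SRel K m l ((Al * Be * Ga * Si) ^ m * Al) 0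
  | r10 : SRel K m l ((Ga * Si * Al * Be) ^ m * Ga) 0

/-- The higher spherical algebra `S(m,λ)`. -/
abbrev SAlg (K : Type*) [Field K] (m : ℕ) (l : K) := RingQuot (SRel K m l)

/-- The canonical projection onto `S(m,λ)`. -/
noncomputable def sq (K : Type*) [Field K] (m : ℕ) (l : K) :
    SFree K →ₐ[K] SAlg K m l := RingQuot.mkAlgHom K (SRel K m l)

end HigherSpherical

private lemma cyc_shift {R : Type*} [Monoid R] (x y : R) : ∀ k : ℕ, x * (y * x) ^ k = (x * y) ^ k * x
  | 0 => by simp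
  | k + 1 => by
    rw [pow_succ', ← mul_assoc x (y * x), ← mul_assoc x y x, mul_assoc (x * y) x,
      cyc_shift x y k, ← mul_assoc, ← pow_succ']

private lemma cyc {R : Type*} [Monoid R] (x y : R) (k : ℕ) :
    x * ((y * x) ^ k * y) = (x * y) ^ (k + 1) := by
  rw [← mul_assoc, cyc_shift, mul_assoc, ← pow_succ]

private lemma key_pow {K R : Type*} [CommSemiring K] [Ring R] [Algebra K R]
    (l : K) (m : ℕ) (hm : 1 ≤ m) (A P : R)
    (hP : P = A + l • A ^ m) (h0 : A ^ (m + 1) = 0) :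
    ∀ r : ℕ, 2 ≤ r → P ^ r = A ^ r := by
  have hz : ∀ k, m + 1 ≤ k → A ^ k = 0 := by
    intro k hk
    obtain ⟨j, rfl⟩ := Nat.exists_eq_add_of_le hk
    rw [pow_add, h0, zero_mul]
  intro r hr
  obtain ⟨n, rfl⟩ := Nat.exists_eq_add_of_le hr
  induction n with
  | zero =>
    show P ^ 2 = A ^ 2
    rw [hP, pow_two]
    simp only [mul_add, add_mul, smul_mul_assoc, mul_smul_comm, smul_smul]
    rw [← pow_succ, ← pow_succ', ← pow_add, h0, hz (m + m) (by omega)]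
    simp [pow_two]
  | succ k ih =>
    have e : 2 + (k + 1) = (2 + k) + 1 := by omega
    rw [e, pow_succ, ih (by omega), hP, mul_add, mul_smul_comm, ← pow_succ, ← pow_add,
      hz (2 + k + m) (by omega), smul_zero, add_zero]

open HigherSpherical in
/-- In the higher spherical algebra `S(m,λ)`, for every `r` with
`2 ≤ r ≤ m` the relations `(ρωνδ)^r = (αβγσ)^r` and `(νδρω)^r = (γσαβ)^r`
hold. -/
theorem S_cycle_powers (K : Type*) [Field K] (m : ℕ) (hm : 2 ≤ m)
    (l : K) (hl : l ≠ 0) :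
    ∀ r : ℕ, 2 ≤ r → r ≤ m →
      sq K m l ((Rh * Om * Nu * De) ^ r) = sq K m l ((Al * Be * Ga * Si) ^ r) ∧
      sq K m l ((Nu * De * Rh * Om) ^ r) = sq K m l ((Ga * Si * Al * Be) ^ r) := by
  have hrel : ∀ {x y : SFree K}, SRel K m l x y → sq K m l x = sq K m l y :=
    fun h => RingQuot.mkAlgHom_rel K h
  set f : SFree K →ₐ[K] SAlg K m l := sq K m l with hfdef
  have h1 := hrel (SRel.r1 (K := K) (m := m) (l := l))
  have h3 := hrel (SRel.r3 (K := K) (m := m) (l := l))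
  have h5 := hrel (SRel.r5 (K := K) (m := m) (l := l))
  have h8 := hrel (SRel.r8 (K := K) (m := m) (l := l))
  have h9 := hrel (SRel.r9 (K := K) (m := m) (l := l))
  have h10 := hrel (SRel.r10 (K := K) (m := m) (l := l))
  simp only [map_mul, map_pow, map_add, map_smul, map_zero] at h1 h3 h5 h8 h9 h10 ⊢
  set a := f Al with ha
  set b := f Be with hb
  set g := f Ga with hg
  set s := f Si with hs
  set n := f Nu with hn
  set d := f De with hd
  set rr := f Rh with hrr
  set o := f Om with ho
  have hA1 : (a * b * g * s) ^ (m + 1) = 0 := by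
    rw [pow_succ, ← mul_assoc, ← mul_assoc, ← mul_assoc, h9, zero_mul, zero_mul, zero_mul]
  have hB1 : (g * s * a * b) ^ (m + 1) = 0 := by
    rw [pow_succ, ← mul_assoc, ← mul_assoc, ← mul_assoc, h10, zero_mul, zero_mul, zero_mul]
  have hPA : rr * o * n * d = a * b * g * s + l • (a * b * g * s) ^ m := by
    rw [← h5, mul_assoc a b n, mul_assoc a (b * n) d, h1, mul_add, mul_smul_comm]
    congr 1
    · rw [← mul_assoc, ← mul_assoc]
    · rw [cyc, Nat.sub_add_cancel (by omega : 1 ≤ m), ← mul_assoc, ← mul_assoc]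
  have hPB : n * d * rr * o = g * s * a * b + l • (g * s * a * b) ^ m := by
    rw [← h8, mul_assoc g s rr, mul_assoc g (s * rr) o, h3, mul_add, mul_smul_comm]
    congr 1
    · rw [← mul_assoc, ← mul_assoc]
    · rw [cyc, Nat.sub_add_cancel (by omega : 1 ≤ m), ← mul_assoc, ← mul_assoc]
  intro r hr _hrm
  exact ⟨key_pow l m (by omega) _ _ hPA hA1 r hr, key_pow l m (by omega) _ _ hPB hB1 r hr⟩
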